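/- arXiv:1812.09667 — 2 statements merged into one kernel-verified Lean document; each statement's English description precedes it below -/
import Mathlib

section
/- Let G be a weighted graph, Ω a finite connected subset, and Γ a subgroup of the Dirichlet automorphism group of Ω. For p > 1, the first Dirichlet eigenvalue of the p-Laplacian on Ω equals the first Dirichlet eigenvalue of the p-Laplacian on the quotient graph: λ_{1,p}(Ω) = λ_{1,p}(Ω/Γ). -/
open scoped BigOperators

namespace PGraph

variable {V : Type*}

/-- The `p`-Dirichlet energy `E_p(u) = (1/2) ∑_{x,y} μ_{xy} |u(y)-u(x)|^p`. -/
noncomputable def energy (μ : V → V → ℝ) (p : ℝ) (u : V → ℝ) : ℝ :=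
  (1 / 2) * ∑ᶠ x : V, ∑ᶠ y : V, μ x y * |u y - u x| ^ p

/-- `‖u‖_{p,Ω}^p = ∑_{x∈Ω} |u(x)|^p ν_x`. -/
noncomputable def pnormP (ν : V → ℝ) (Ω : Finset V) (p : ℝ) (u : V → ℝ) : ℝ :=
  ∑ x ∈ Ω, |u x| ^ p * ν x

/-- The `p`-Laplacian `Δ_p u(x) = (1/ν_x) ∑_y μ_{xy} |u(y)-u(x)|^{p-2}(u(y)-u(x))`. -/
noncomputable def plap (μ : V → V → ℝ) (ν : V → ℝ) (p : ℝ) (u : V → ℝ) (x : V) : ℝ :=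
  (1 / ν x) * ∑ᶠ y : V, μ x y * (|u y - u x| ^ (p - 2) * (u y - u x))

/-- `u` is an eigenfunction of the Dirichlet `p`-Laplacian on `Ω` with eigenvalue `lam`:
`u` vanishes outside `Ω` (zero extension), `u ≢ 0` on `Ω`, and
`Δ_p u = -lam |u|^{p-2} u` on `Ω`. -/
def IsDirEigenfun (μ : V → V → ℝ) (ν : V → ℝ) (Ω : Finset V) (p : ℝ)
    (u : V → ℝ) (lam : ℝ) : Prop :=
  (∀ x, x ∉ Ω → u x = 0) ∧ (∃ x ∈ Ω, u x ≠ 0) ∧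
    ∀ x ∈ Ω, plap μ ν p u x = -lam * (|u x| ^ (p - 2) * u x)

/-- The first Dirichlet eigenvalue, via the Rayleigh quotient characterization. -/
noncomputable def lam1 (μ : V → V → ℝ) (ν : V → ℝ) (Ω : Finset V) (p : ℝ) : ℝ :=
  sInf {t : ℝ | ∃ u : V → ℝ, (∀ x, x ∉ Ω → u x = 0) ∧ (∃ x ∈ Ω, u x ≠ 0) ∧
    t = energy μ p u / pnormP ν Ω p u}

/-- The maximum Dirichlet eigenvalue, via the Rayleigh quotient characterization. -/
noncomputable def lamMax (μ : V → V → ℝ) (ν : V → ℝ) (Ω : Finset V) (p : ℝ) : ℝ :=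
  sSup {t : ℝ | ∃ u : V → ℝ, (∀ x, x ∉ Ω → u x = 0) ∧ (∃ x ∈ Ω, u x ≠ 0) ∧
    t = energy μ p u / pnormP ν Ω p u}

/-- The induced subgraph on `Ω` is connected. -/
def ConnOn (μ : V → V → ℝ) (Ω : Finset V) : Prop :=
  ∀ x ∈ Ω, ∀ y ∈ Ω,
    Relation.ReflTransGen (fun a b => a ∈ Ω ∧ b ∈ Ω ∧ 0 < μ a b) x y

/-- The induced subgraph on `Ω` is bipartite with parts `V₁, V₂`. -/
def BipartiteOn (μ : V → V → ℝ) (Ω : Finset V) : Prop :=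
  ∃ V₁ V₂ : Set V, (Ω : Set V) = V₁ ∪ V₂ ∧ Disjoint V₁ V₂ ∧
    ∀ x ∈ Ω, ∀ y ∈ Ω, 0 < μ x y → ((x ∈ V₁ ∧ y ∈ V₂) ∨ (x ∈ V₂ ∧ y ∈ V₁))

/-- A locally finite weighted graph: symmetric nonnegative edge weights without
self-loops, finitely many neighbours at each vertex, positive vertex weights. -/
structure IsWeightedGraph (μ : V → V → ℝ) (ν : V → ℝ) : Prop where
  symm : ∀ x y, μ x y = μ y x
  nonneg : ∀ x y, 0 ≤ μ x y
  loopless : ∀ x, μ x x = 0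
  locFin : ∀ x, (Function.support (μ x)).Finite
  nuPos : ∀ x, 0 < ν x

/-- The edge boundary measure `|∂U|_μ` of a finite vertex set `U`. -/
noncomputable def bdryWt (μ : V → V → ℝ) (U : Finset V) : ℝ :=
  ∑ x ∈ U, ∑ᶠ y ∈ {z : V | z ∉ U}, μ x y

/-- The Dirichlet Cheeger constant `h_{μ,ν}(Ω) = min_{∅ ≠ U ⊆ Ω} |∂U|_μ / |U|_ν`. -/
noncomputable def cheeger (μ : V → V → ℝ) (ν : V → ℝ) (Ω : Finset V) : ℝ :=
  sInf {t : ℝ | ∃ U : Finset V, U ⊆ Ω ∧ U.Nonempty ∧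
    t = bdryWt μ U / ∑ x ∈ U, ν x}

end PGraph

namespace PGraph

variable {V : Type*} (G : Type*) [Group G] [MulAction G V]

/-- The orbit of `x` in the quotient `V / Γ`. -/
def qmk (x : V) : Quotient (MulAction.orbitRel G V) :=
  Quotient.mk (MulAction.orbitRel G V) x

/-- `Γ` acts on `Ω` by Dirichlet automorphisms: each group element preserves `Ω`, the
vertex weights and edge weights on `Ω`, and the total edge weight from each vertex of `Ω`
to the complement of `Ω`. -/
def IsDAutAction (μ : V → V → ℝ) (ν : V → ℝ) (Ω : Finset V) : Prop :=
  (∀ (g : G), ∀ x ∈ Ω, g • x ∈ Ω) ∧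
  (∀ (g : G), ∀ x ∈ Ω, ν (g • x) = ν x) ∧
  (∀ (g : G), ∀ x ∈ Ω, ∀ y ∈ Ω, μ (g • x) (g • y) = μ x y) ∧
  (∀ (g : G), ∀ x ∈ Ω,
    (∑ᶠ y ∈ {z : V | z ∉ Ω}, μ (g • x) y) = ∑ᶠ y ∈ {z : V | z ∉ Ω}, μ x y)

/-- Vertex weights of the quotient graph: an orbit `[x]` of `Ω` gets the total `ν`-weight
of the orbit; the extra point `none` represents the collapsed complement of `Ω`. -/
noncomputable def quotNu (ν : V → ℝ) (Ω : Finset V) :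
    Option (Quotient (MulAction.orbitRel G V)) → ℝ
  | none => 1
  | some q => ∑ᶠ x ∈ {z : V | z ∈ Ω ∧ qmk G z = q}, ν x

open Classical in
/-- Edge weights of the quotient graph: `μ_{[x][y]} = ∑_{x₁∈[x], y₁∈[y]} μ_{x₁y₁}` for
distinct orbits (no self-loops), and the boundary point `none` carries the total edge
weight to the complement of `Ω`. -/
noncomputable def quotMu (μ : V → V → ℝ) (Ω : Finset V) :
    Option (Quotient (MulAction.orbitRel G V)) →
      Option (Quotient (MulAction.orbitRel G V)) → ℝ
  | some q, some q' =>
      if q = q' then 0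
      else ∑ᶠ x ∈ {z : V | z ∈ Ω ∧ qmk G z = q},
        ∑ᶠ y ∈ {z : V | z ∈ Ω ∧ qmk G z = q'}, μ x y
  | some q, none =>
      ∑ᶠ x ∈ {z : V | z ∈ Ω ∧ qmk G z = q}, ∑ᶠ y ∈ {z : V | z ∉ Ω}, μ x y
  | none, some q =>
      ∑ᶠ x ∈ {z : V | z ∈ Ω ∧ qmk G z = q}, ∑ᶠ y ∈ {z : V | z ∉ Ω}, μ x y
  | none, none => 0

open Classical in
/-- The image of `Ω` in the quotient graph: the set of orbits of points of `Ω`. -/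
noncomputable def quotOmega (Ω : Finset V) :
    Finset (Option (Quotient (MulAction.orbitRel G V))) :=
  Ω.image fun x => some (qmk G x)

section Aux

variable {μ : V → V → ℝ} {ν : V → ℝ} {Ω : Finset V} {p : ℝ}

open Real Finset

/-- Total edge weight from `x` to the complement of `Ω`. -/
noncomputable def bnd (μ : V → V → ℝ) (Ω : Finset V) (x : V) : ℝ :=
  ∑ᶠ y ∈ {z : V | z ∉ Ω}, μ x y

open Classical in
/-- The part of the orbit `q` lying in `Ω` (which is the whole orbit if it meets `Ω`). -/
noncomputable def clsF (Ω : Finset V) (q : Quotient (MulAction.orbitRel G V)) : Finset V :=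
  Ω.filter (fun z => qmk G z = q)

open Classical in
/-- The set of orbits meeting `Ω`. -/
noncomputable def orbT (Ω : Finset V) : Finset (Quotient (MulAction.orbitRel G V)) :=
  Ω.image (qmk G)

open Classical in
/-- Lift of a function on the quotient to `V`, extended by zero off `Ω`. -/
noncomputable def liftF (Ω : Finset V) (f : Option (Quotient (MulAction.orbitRel G V)) → ℝ)
    (x : V) : ℝ :=
  if x ∈ Ω then f (some (qmk G x)) else 0

/-- The `p`-symmetrization of `u` as a function on the quotient. -/
noncomputable def symF (Ω : Finset V) (p : ℝ) (u : V → ℝ) :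
    Option (Quotient (MulAction.orbitRel G V)) → ℝ
  | none => 0
  | some q => ((∑ x ∈ clsF G Ω q, |u x| ^ p) / (clsF G Ω q).card) ^ p⁻¹

lemma qmk_smul (g : G) (x : V) : qmk G (g • x) = qmk G x :=
  Quotient.sound (MulAction.mem_orbit x g)

lemma exists_smul_eq_of_qmk_eq {x y : V} (h : qmk G x = qmk G y) : ∃ g : G, g • y = x := by
  obtain ⟨g, hg⟩ := Quotient.exact h
  exact ⟨g, hg⟩

lemma mem_clsF {q : Quotient (MulAction.orbitRel G V)} {x : V} :
    x ∈ clsF G Ω q ↔ x ∈ Ω ∧ qmk G x = q := by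
  simp [clsF]

lemma mem_orbT {q : Quotient (MulAction.orbitRel G V)} :
    q ∈ orbT G Ω ↔ ∃ x ∈ Ω, qmk G x = q := by
  simp [orbT]

lemma clsF_nonempty {q : Quotient (MulAction.orbitRel G V)} (hq : q ∈ orbT G Ω) :
    (clsF G Ω q).Nonempty := by
  obtain ⟨x, hx, hxq⟩ := (mem_orbT G).1 hq
  exact ⟨x, (mem_clsF G).2 ⟨hx, hxq⟩⟩

lemma clsF_eq_empty {q : Quotient (MulAction.orbitRel G V)} (hq : q ∉ orbT G Ω) :
    clsF G Ω q = ∅ := by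
  rw [Finset.eq_empty_iff_forall_notMem]
  intro x hx
  obtain ⟨hxΩ, hxq⟩ := (mem_clsF G).1 hx
  exact hq ((mem_orbT G).2 ⟨x, hxΩ, hxq⟩)

lemma clsSet_eq (q : Quotient (MulAction.orbitRel G V)) :
    {z : V | z ∈ Ω ∧ qmk G z = q} = ↑(clsF G Ω q) := by
  ext z; simp [clsF]

open Classical in
lemma quotOmega_eq : quotOmega G Ω = (orbT G Ω).image some := by
  unfold quotOmega orbT
  rw [Finset.image_image]
  rfl

lemma mem_quotOmega_some {q : Quotient (MulAction.orbitRel G V)} :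
    some q ∈ quotOmega G Ω ↔ q ∈ orbT G Ω := by
  rw [quotOmega_eq]
  simp

lemma none_notMem_quotOmega : (none : Option (Quotient (MulAction.orbitRel G V)))
    ∉ quotOmega G Ω := by
  rw [quotOmega_eq]
  simp

open Classical in
lemma quotMu_some_some (q q' : Quotient (MulAction.orbitRel G V)) :
    quotMu G μ Ω (some q) (some q')
      = if q = q' then 0 else ∑ x ∈ clsF G Ω q, ∑ y ∈ clsF G Ω q', μ x y := by
  by_cases h : q = q'
  · simp [quotMu, h]
  · simp only [quotMu, if_neg h, clsSet_eq, finsum_mem_coe_finset]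

lemma quotMu_some_none (q : Quotient (MulAction.orbitRel G V)) :
    quotMu G μ Ω (some q) none = ∑ x ∈ clsF G Ω q, bnd μ Ω x := by
  simp only [quotMu, clsSet_eq, finsum_mem_coe_finset]
  rfl

lemma quotMu_none_some (q : Quotient (MulAction.orbitRel G V)) :
    quotMu G μ Ω none (some q) = quotMu G μ Ω (some q) none := rfl

lemma quotMu_none_none : quotMu G μ Ω none none = 0 := rfl

lemma bnd_nonneg (hμ : ∀ x y, 0 ≤ μ x y) (x : V) : 0 ≤ bnd μ Ω x :=
  finsum_nonneg fun y => finsum_nonneg fun _ => hμ x y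

lemma quotMu_nonneg (hμ : ∀ x y, 0 ≤ μ x y) :
    ∀ w w', 0 ≤ quotMu G μ Ω w w' := by
  intro w w'
  match w, w' with
  | none, none => simp [quotMu_none_none]
  | none, some q =>
      rw [quotMu_none_some, quotMu_some_none]
      exact Finset.sum_nonneg fun x _ => bnd_nonneg hμ x
  | some q, none =>
      rw [quotMu_some_none]
      exact Finset.sum_nonneg fun x _ => bnd_nonneg hμ x
  | some q, some q' =>
      rw [quotMu_some_some]
      split
      · exact le_rfl
      · exact Finset.sum_nonneg fun x _ => Finset.sum_nonneg fun y _ => hμ x y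

lemma quotNu_nonneg (hν : ∀ x, 0 < ν x) :
    ∀ w, 0 ≤ quotNu G ν Ω w := by
  intro w
  match w with
  | none => norm_num [quotNu]
  | some q =>
      show (0:ℝ) ≤ ∑ᶠ x ∈ {z : V | z ∈ Ω ∧ qmk G z = q}, ν x
      exact finsum_nonneg fun x => finsum_nonneg fun _ => (hν x).le

lemma sum_fiber (F : V → ℝ) :
    ∑ x ∈ Ω, F x = ∑ q ∈ orbT G Ω, ∑ x ∈ clsF G Ω q, F x := by
  classical
  unfold orbT clsF
  exact (Finset.sum_fiberwise_of_maps_to (fun x hx => Finset.mem_image_of_mem _ hx) F).symm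

lemma bnd_eq_sum {x : V} {T : Finset V}
    (hT : ∀ y, μ x y ≠ 0 → y ∉ Ω → y ∈ T) (hTΩ : ∀ y ∈ T, y ∉ Ω) :
    bnd μ Ω x = ∑ y ∈ T, μ x y := by
  apply finsum_mem_eq_sum_of_inter_support_eq
  ext y
  simp only [Set.mem_inter_iff, Set.mem_setOf_eq, Function.mem_support, Finset.coe_sort_coe,
    Finset.mem_coe]
  exact ⟨fun h => ⟨hT y h.2 h.1, h.2⟩, fun h => ⟨hTΩ y h.1, h.2⟩⟩

lemma energy_nonneg (hμ : ∀ x y, 0 ≤ μ x y) (u : V → ℝ) : 0 ≤ energy μ p u := by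
  unfold energy
  apply mul_nonneg (by norm_num)
  exact finsum_nonneg fun x => finsum_nonneg fun y =>
    mul_nonneg (hμ x y) (Real.rpow_nonneg (abs_nonneg _) _)

lemma pnormP_nonneg (hν : ∀ w, 0 ≤ ν w) (u : V → ℝ) : 0 ≤ pnormP ν Ω p u :=
  Finset.sum_nonneg fun x _ => mul_nonneg (Real.rpow_nonneg (abs_nonneg _) _) (hν x)

lemma pnormP_pos (hν : ∀ x, 0 < ν x) {u : V → ℝ} {x₀ : V} (hx₀ : x₀ ∈ Ω) (hu : u x₀ ≠ 0) :
    0 < pnormP ν Ω p u := by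
  unfold pnormP
  apply Finset.sum_pos' (fun x _ => mul_nonneg (Real.rpow_nonneg (abs_nonneg _) _) (hν x).le)
  exact ⟨x₀, hx₀, mul_pos (Real.rpow_pos_of_pos (abs_pos.2 hu) _) (hν x₀)⟩

lemma energy_eq_of_zero_off (hG : IsWeightedGraph μ ν) (hp0 : p ≠ 0)
    (u : V → ℝ) (hu0 : ∀ x, x ∉ Ω → u x = 0) :
    energy μ p u = (1 / 2) * (∑ x ∈ Ω, ∑ y ∈ Ω, μ x y * |u y - u x| ^ p)
      + ∑ x ∈ Ω, bnd μ Ω x * |u x| ^ p := by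
  classical
  set t : V → V → ℝ := fun x y => μ x y * |u y - u x| ^ p with ht
  set S : Finset V := Ω ∪ Ω.biUnion (fun y => (hG.locFin y).toFinset) with hS
  have hΩS : Ω ⊆ S := Finset.subset_union_left
  have hnbr : ∀ {x y : V}, x ∈ Ω → μ x y ≠ 0 → y ∈ S := by
    intro x y hx hμxy
    exact Finset.mem_union_right _ (Finset.mem_biUnion.2
      ⟨x, hx, (hG.locFin x).mem_toFinset.2 hμxy⟩)
  have hts : ∀ {x y : V}, t x y ≠ 0 → x ∈ S ∧ y ∈ S := by
    intro x y htxy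
    have hμxy : μ x y ≠ 0 := fun h => htxy (by simp [ht, h])
    have hor : x ∈ Ω ∨ y ∈ Ω := by
      by_contra hc
      push_neg at hc
      exact htxy (by simp [ht, hu0 x hc.1, hu0 y hc.2, Real.zero_rpow hp0])
    rcases hor with hx | hy
    · exact ⟨hΩS hx, hnbr hx hμxy⟩
    · have hμyx : μ y x ≠ 0 := by rw [hG.symm y x]; exact hμxy
      exact ⟨hnbr hy hμyx, hΩS hy⟩
  have hinner : ∀ x, (∑ᶠ y, t x y) = ∑ y ∈ S, t x y := by
    intro x
    exact finsum_eq_sum_of_support_subset _ (fun y hy => (hts hy).2)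
  have houter : energy μ p u = (1 / 2) * ∑ x ∈ S, ∑ y ∈ S, t x y := by
    unfold energy
    congr 1
    calc (∑ᶠ x, ∑ᶠ y, μ x y * |u y - u x| ^ p) = ∑ᶠ x, ∑ y ∈ S, t x y :=
          finsum_congr hinner
      _ = ∑ x ∈ S, ∑ y ∈ S, t x y := by
          apply finsum_eq_sum_of_support_subset
          intro x hx
          obtain ⟨y, _, hy⟩ := Finset.exists_ne_zero_of_sum_ne_zero hx
          exact (hts hy).1
  have hS_eq : ∀ (f : V → ℝ), ∑ x ∈ S, f x = ∑ x ∈ Ω, f x + ∑ x ∈ S \ Ω, f x := by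
    intro f
    rw [← Finset.sum_sdiff hΩS]
    ring
  have hbtop : ∀ {x : V}, x ∈ Ω → bnd μ Ω x = ∑ y ∈ S \ Ω, μ x y := by
    intro x hx
    apply bnd_eq_sum
    · exact fun y hy hyΩ => Finset.mem_sdiff.2 ⟨hnbr hx hy, hyΩ⟩
    · exact fun y hy => (Finset.mem_sdiff.1 hy).2
  have hcrossΩB : ∀ x ∈ Ω, ∑ y ∈ S \ Ω, t x y = bnd μ Ω x * |u x| ^ p := by
    intro x hx
    have h1 : ∀ y ∈ S \ Ω, t x y = μ x y * |u x| ^ p := by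
      intro y hy
      rw [ht]
      simp only
      rw [hu0 y (Finset.mem_sdiff.1 hy).2, zero_sub, abs_neg]
    rw [Finset.sum_congr rfl h1, ← Finset.sum_mul, hbtop hx]
  have hBB : ∑ x ∈ S \ Ω, ∑ y ∈ S \ Ω, t x y = 0 := by
    apply Finset.sum_eq_zero
    intro x hx
    apply Finset.sum_eq_zero
    intro y hy
    rw [ht]
    simp [hu0 x (Finset.mem_sdiff.1 hx).2, hu0 y (Finset.mem_sdiff.1 hy).2,
      Real.zero_rpow hp0]
  have hBΩ : ∑ x ∈ S \ Ω, ∑ y ∈ Ω, t x y = ∑ y ∈ Ω, bnd μ Ω y * |u y| ^ p := by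
    rw [Finset.sum_comm]
    refine Finset.sum_congr rfl fun y hy => ?_
    have h1 : ∀ x ∈ S \ Ω, t x y = μ y x * |u y| ^ p := by
      intro x hx
      rw [ht]
      simp only
      rw [hu0 x (Finset.mem_sdiff.1 hx).2, sub_zero, hG.symm x y]
    rw [Finset.sum_congr rfl h1, ← Finset.sum_mul, hbtop hy]
  have e1 : ∑ x ∈ Ω, ∑ y ∈ S, t x y
      = (∑ x ∈ Ω, ∑ y ∈ Ω, t x y) + ∑ x ∈ Ω, bnd μ Ω x * |u x| ^ p := by
    rw [← Finset.sum_add_distrib]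
    refine Finset.sum_congr rfl fun x hx => ?_
    rw [hS_eq (t x), hcrossΩB x hx]
  have e2 : ∑ x ∈ S \ Ω, ∑ y ∈ S, t x y = ∑ y ∈ Ω, bnd μ Ω y * |u y| ^ p := by
    calc ∑ x ∈ S \ Ω, ∑ y ∈ S, t x y
        = ∑ x ∈ S \ Ω, (∑ y ∈ Ω, t x y + ∑ y ∈ S \ Ω, t x y) :=
          Finset.sum_congr rfl fun x _ => hS_eq (t x)
      _ = (∑ x ∈ S \ Ω, ∑ y ∈ Ω, t x y) + ∑ x ∈ S \ Ω, ∑ y ∈ S \ Ω, t x y :=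
          Finset.sum_add_distrib
      _ = ∑ y ∈ Ω, bnd μ Ω y * |u y| ^ p := by rw [hBB, hBΩ, add_zero]
  rw [houter, hS_eq (fun x => ∑ y ∈ S, t x y), e1, e2]
  ring

lemma energyQ_eq (hp0 : p ≠ 0) (f : Option (Quotient (MulAction.orbitRel G V)) → ℝ)
    (hf0 : ∀ w, w ∉ quotOmega G Ω → f w = 0) :
    energy (quotMu G μ Ω) p f
      = (1 / 2) * (∑ q ∈ orbT G Ω, ∑ q' ∈ orbT G Ω,
          quotMu G μ Ω (some q) (some q') * |f (some q') - f (some q)| ^ p)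
        + ∑ q ∈ orbT G Ω, quotMu G μ Ω (some q) none * |f (some q)| ^ p := by
  classical
  set tQ : Option (Quotient (MulAction.orbitRel G V)) →
      Option (Quotient (MulAction.orbitRel G V)) → ℝ :=
    fun w w' => quotMu G μ Ω w w' * |f w' - f w| ^ p with htQ
  set SQ : Finset (Option (Quotient (MulAction.orbitRel G V))) :=
    insert none ((orbT G Ω).image some) with hSQ
  have hzero : ∀ {q : Quotient (MulAction.orbitRel G V)}, q ∉ orbT G Ω →
      ∀ w, quotMu G μ Ω (some q) w = 0 ∧ quotMu G μ Ω w (some q) = 0 := by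
    intro q hq w
    have hc : clsF G Ω q = ∅ := clsF_eq_empty G hq
    match w with
    | none =>
        constructor
        · rw [quotMu_some_none, hc, Finset.sum_empty]
        · rw [quotMu_none_some, quotMu_some_none, hc, Finset.sum_empty]
    | some q' =>
        constructor
        · rw [quotMu_some_some]
          split
          · rfl
          · rw [hc, Finset.sum_empty]
        · rw [quotMu_some_some]
          split
          · rfl
          · rw [hc]
            simp
  have hmemSQ : ∀ {w}, w ∉ SQ → ∀ w', quotMu G μ Ω w w' = 0 ∧ quotMu G μ Ω w' w = 0 := by
    intro w hw w'
    match w with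
    | none => exact absurd (Finset.mem_insert_self _ _) hw
    | some q =>
        have hq : q ∉ orbT G Ω := fun h =>
          hw (Finset.mem_insert_of_mem (Finset.mem_image_of_mem _ h))
        exact hzero hq w'
  have hts : ∀ {w w'}, tQ w w' ≠ 0 → w ∈ SQ ∧ w' ∈ SQ := by
    intro w w' h
    constructor
    · by_contra hw
      exact h (by simp [htQ, (hmemSQ hw w').1])
    · by_contra hw'
      exact h (by simp [htQ, (hmemSQ hw' w).2])
  have houter : energy (quotMu G μ Ω) p f = (1 / 2) * ∑ w ∈ SQ, ∑ w' ∈ SQ, tQ w w' := by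
    unfold energy
    congr 1
    calc (∑ᶠ w, ∑ᶠ w', quotMu G μ Ω w w' * |f w' - f w| ^ p)
        = ∑ᶠ w, ∑ w' ∈ SQ, tQ w w' := finsum_congr fun w =>
            finsum_eq_sum_of_support_subset _ (fun w' hw' => (hts hw').2)
      _ = ∑ w ∈ SQ, ∑ w' ∈ SQ, tQ w w' := by
          apply finsum_eq_sum_of_support_subset
          intro w hw
          obtain ⟨w', _, hw'⟩ := Finset.exists_ne_zero_of_sum_ne_zero hw
          exact (hts hw').1
  have hnone : (none : Option (Quotient (MulAction.orbitRel G V)))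
      ∉ (orbT G Ω).image some := by simp
  have hfnone : f none = 0 := hf0 none (none_notMem_quotOmega G)
  have hsum : ∀ (F : Option (Quotient (MulAction.orbitRel G V)) → ℝ),
      ∑ w ∈ SQ, F w = F none + ∑ q ∈ orbT G Ω, F (some q) := by
    intro F
    rw [hSQ, Finset.sum_insert hnone,
      Finset.sum_image (fun a _ b _ h => Option.some_injective _ h)]
  have hrow : ∀ q ∈ orbT G Ω, ∑ w' ∈ SQ, tQ (some q) w'
      = quotMu G μ Ω (some q) none * |f (some q)| ^ p
        + ∑ q' ∈ orbT G Ω, tQ (some q) (some q') := by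
    intro q _
    rw [hsum]
    congr 1
    simp [htQ, hfnone]
  have hnonerow : ∑ w' ∈ SQ, tQ none w'
      = ∑ q' ∈ orbT G Ω, quotMu G μ Ω (some q') none * |f (some q')| ^ p := by
    rw [hsum]
    have h0 : tQ none none = 0 := by simp [htQ, quotMu_none_none]
    rw [h0, zero_add]
    refine Finset.sum_congr rfl fun q' _ => ?_
    simp [htQ, quotMu_none_some, hfnone]
  have main : ∑ w ∈ SQ, ∑ w' ∈ SQ, tQ w w'
      = (∑ q ∈ orbT G Ω, ∑ q' ∈ orbT G Ω, tQ (some q) (some q'))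
        + 2 * ∑ q ∈ orbT G Ω, quotMu G μ Ω (some q) none * |f (some q)| ^ p := by
    rw [hsum (fun w => ∑ w' ∈ SQ, tQ w w')]
    rw [hnonerow, Finset.sum_congr rfl hrow, Finset.sum_add_distrib]
    ring
  rw [houter, main]
  simp only [htQ]
  ring

lemma liftF_zero_off (f : Option (Quotient (MulAction.orbitRel G V)) → ℝ) :
    ∀ x, x ∉ Ω → liftF G Ω f x = 0 := fun _ hx => if_neg hx

lemma pnorm_lift (f : Option (Quotient (MulAction.orbitRel G V)) → ℝ) :
    pnormP ν Ω p (liftF G Ω f) = pnormP (quotNu G ν Ω) (quotOmega G Ω) p f := by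
  classical
  unfold pnormP
  rw [sum_fiber G (F := fun x => |liftF G Ω f x| ^ p * ν x), quotOmega_eq,
    Finset.sum_image (fun a _ b _ h => Option.some_injective _ h)]
  refine Finset.sum_congr rfl fun q hq => ?_
  have h1 : ∀ x ∈ clsF G Ω q, |liftF G Ω f x| ^ p * ν x = |f (some q)| ^ p * ν x := by
    intro x hx
    obtain ⟨hxΩ, hxq⟩ := (mem_clsF G).1 hx
    simp only [liftF, if_pos hxΩ, hxq]
  rw [Finset.sum_congr rfl h1, ← Finset.mul_sum]
  congr 1
  show (∑ x ∈ clsF G Ω q, ν x) = quotNu G ν Ω (some q)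
  rw [show quotNu G ν Ω (some q) = ∑ᶠ x ∈ {z : V | z ∈ Ω ∧ qmk G z = q}, ν x from rfl,
    clsSet_eq, finsum_mem_coe_finset]

lemma interior_group (F : V → V → ℝ) :
    ∑ x ∈ Ω, ∑ y ∈ Ω, F x y
      = ∑ q ∈ orbT G Ω, ∑ q' ∈ orbT G Ω, ∑ x ∈ clsF G Ω q, ∑ y ∈ clsF G Ω q', F x y := by
  rw [sum_fiber G (F := fun x => ∑ y ∈ Ω, F x y)]
  refine Finset.sum_congr rfl fun q _ => ?_
  calc ∑ x ∈ clsF G Ω q, ∑ y ∈ Ω, F x y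
      = ∑ x ∈ clsF G Ω q, ∑ q' ∈ orbT G Ω, ∑ y ∈ clsF G Ω q', F x y :=
        Finset.sum_congr rfl fun x _ => sum_fiber G (F := fun y => F x y)
    _ = ∑ q' ∈ orbT G Ω, ∑ x ∈ clsF G Ω q, ∑ y ∈ clsF G Ω q', F x y := Finset.sum_comm

lemma interior_lift (f : Option (Quotient (MulAction.orbitRel G V)) → ℝ) :
    ∑ x ∈ Ω, ∑ y ∈ Ω, μ x y * |liftF G Ω f y - liftF G Ω f x| ^ p
      = ∑ q ∈ orbT G Ω, ∑ q' ∈ orbT G Ω,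
          (∑ x ∈ clsF G Ω q, ∑ y ∈ clsF G Ω q', μ x y) * |f (some q') - f (some q)| ^ p := by
  rw [interior_group G]
  refine Finset.sum_congr rfl fun q _ => Finset.sum_congr rfl fun q' _ => ?_
  calc ∑ x ∈ clsF G Ω q, ∑ y ∈ clsF G Ω q', μ x y * |liftF G Ω f y - liftF G Ω f x| ^ p
      = ∑ x ∈ clsF G Ω q, ∑ y ∈ clsF G Ω q', μ x y * |f (some q') - f (some q)| ^ p := by
        refine Finset.sum_congr rfl fun x hx => Finset.sum_congr rfl fun y hy => ?_
        obtain ⟨hxΩ, hxq⟩ := (mem_clsF G).1 hx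
        obtain ⟨hyΩ, hyq⟩ := (mem_clsF G).1 hy
        simp only [liftF, if_pos hxΩ, if_pos hyΩ, hxq, hyq]
    _ = (∑ x ∈ clsF G Ω q, ∑ y ∈ clsF G Ω q', μ x y) * |f (some q') - f (some q)| ^ p := by
        rw [Finset.sum_mul]
        exact Finset.sum_congr rfl fun x _ => (Finset.sum_mul _ _ _).symm

lemma energy_lift (hG : IsWeightedGraph μ ν) (hp0 : p ≠ 0)
    (f : Option (Quotient (MulAction.orbitRel G V)) → ℝ)
    (hf0 : ∀ w, w ∉ quotOmega G Ω → f w = 0) :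
    energy μ p (liftF G Ω f) = energy (quotMu G μ Ω) p f := by
  rw [energy_eq_of_zero_off hG hp0 _ (liftF_zero_off G f), energyQ_eq G hp0 f hf0]
  congr 1
  · congr 1
    rw [interior_lift G f]
    refine Finset.sum_congr rfl fun q hq => Finset.sum_congr rfl fun q' hq' => ?_
    rw [quotMu_some_some]
    by_cases h : q = q'
    · subst h
      rw [if_pos rfl]
      simp [sub_self, Real.zero_rpow hp0]
    · rw [if_neg h]
  · rw [sum_fiber G (F := fun x => bnd μ Ω x * |liftF G Ω f x| ^ p)]
    refine Finset.sum_congr rfl fun q hq => ?_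
    rw [quotMu_some_none]
    have h1 : ∀ x ∈ clsF G Ω q, bnd μ Ω x * |liftF G Ω f x| ^ p
        = bnd μ Ω x * |f (some q)| ^ p := by
      intro x hx
      obtain ⟨hxΩ, hxq⟩ := (mem_clsF G).1 hx
      simp only [liftF, if_pos hxΩ, hxq]
    rw [Finset.sum_congr rfl h1, ← Finset.sum_mul]

lemma weighted_minkowski {ι : Type*} (s : Finset ι) (w φ ψ : ι → ℝ) (hw : ∀ i ∈ s, 0 ≤ w i)
    (hp : 1 < p) {α β : ℝ} (hα : 0 ≤ α) (hβ : 0 ≤ β)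
    (hX : ∑ i ∈ s, w i * |φ i| ^ p = (∑ i ∈ s, w i) * α ^ p)
    (hY : ∑ i ∈ s, w i * |ψ i| ^ p = (∑ i ∈ s, w i) * β ^ p) :
    (∑ i ∈ s, w i) * |β - α| ^ p ≤ ∑ i ∈ s, w i * |ψ i - φ i| ^ p := by
  have hppos : (0:ℝ) < p := zero_lt_one.trans hp
  have hp0 : p ≠ 0 := hppos.ne'
  set M := ∑ i ∈ s, w i with hM
  have hM0 : 0 ≤ M := Finset.sum_nonneg hw
  set F : ι → ℝ := fun i => w i ^ p⁻¹ * φ i with hF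
  set Gf : ι → ℝ := fun i => w i ^ p⁻¹ * ψ i with hGf
  set D : ι → ℝ := fun i => w i ^ p⁻¹ * (ψ i - φ i) with hD
  have habs : ∀ (v : ι → ℝ), ∀ i ∈ s, |w i ^ p⁻¹ * v i| ^ p = w i * |v i| ^ p := by
    intro v i hi
    rw [abs_mul, abs_of_nonneg (Real.rpow_nonneg (hw i hi) _),
      Real.mul_rpow (Real.rpow_nonneg (hw i hi) _) (abs_nonneg _),
      Real.rpow_inv_rpow (hw i hi) hp0]
  have hsF : ∑ i ∈ s, |F i| ^ p = M * α ^ p := by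
    rw [← hX]
    exact Finset.sum_congr rfl (habs φ)
  have hsG : ∑ i ∈ s, |Gf i| ^ p = M * β ^ p := by
    rw [← hY]
    exact Finset.sum_congr rfl (habs ψ)
  set R := ∑ i ∈ s, w i * |ψ i - φ i| ^ p with hR
  have hsD : ∑ i ∈ s, |D i| ^ p = R := Finset.sum_congr rfl (habs _)
  have hR0 : 0 ≤ R :=
    Finset.sum_nonneg fun i hi => mul_nonneg (hw i hi) (Real.rpow_nonneg (abs_nonneg _) _)
  have hmink1 : (M * β ^ p) ^ (1/p) ≤ R ^ (1/p) + (M * α ^ p) ^ (1/p) := by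
    have h := Real.Lp_add_le s D F hp.le
    have e1 : ∑ i ∈ s, |D i + F i| ^ p = M * β ^ p := by
      rw [← hsG]
      refine Finset.sum_congr rfl fun i _ => ?_
      have : D i + F i = Gf i := by
        simp only [hD, hF, hGf]
        ring
      rw [this]
    rw [e1, hsD, hsF] at h
    exact h
  have hmink2 : (M * α ^ p) ^ (1/p) ≤ R ^ (1/p) + (M * β ^ p) ^ (1/p) := by
    have h := Real.Lp_add_le s (fun i => -D i) Gf hp.le
    have e1 : ∑ i ∈ s, |(-D i) + Gf i| ^ p = M * α ^ p := by
      rw [← hsF]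
      refine Finset.sum_congr rfl fun i _ => ?_
      have : -D i + Gf i = F i := by
        simp only [hD, hF, hGf]
        ring
      rw [this]
    have e2 : ∑ i ∈ s, |(fun i => -D i) i| ^ p = R := by
      rw [← hsD]
      refine Finset.sum_congr rfl fun i _ => ?_
      rw [abs_neg]
    rw [e1, e2, hsG] at h
    exact h
  simp only [one_div] at hmink1 hmink2
  have hXval : (M * α ^ p) ^ p⁻¹ = M ^ p⁻¹ * α := by
    rw [Real.mul_rpow hM0 (Real.rpow_nonneg hα _), Real.rpow_rpow_inv hα hp0]
  have hYval : (M * β ^ p) ^ p⁻¹ = M ^ p⁻¹ * β := by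
    rw [Real.mul_rpow hM0 (Real.rpow_nonneg hβ _), Real.rpow_rpow_inv hβ hp0]
  rw [hXval, hYval] at hmink1 hmink2
  have key : M ^ p⁻¹ * |β - α| ≤ R ^ p⁻¹ := by
    calc M ^ p⁻¹ * |β - α| = |M ^ p⁻¹ * β - M ^ p⁻¹ * α| := by
          rw [← mul_sub, abs_mul, abs_of_nonneg (Real.rpow_nonneg hM0 _)]
      _ ≤ R ^ p⁻¹ := by
          rw [abs_sub_le_iff]
          constructor <;> linarith
  have hfin := Real.rpow_le_rpow (by positivity) key hppos.le
  rw [Real.mul_rpow (Real.rpow_nonneg hM0 _) (abs_nonneg _),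
    Real.rpow_inv_rpow hM0 hp0, Real.rpow_inv_rpow hR0 hp0] at hfin
  exact hfin

lemma smul_mem_clsF (hact : IsDAutAction G μ ν Ω) {q : Quotient (MulAction.orbitRel G V)}
    {b : V} (hb : b ∈ clsF G Ω q) (g : G) : g • b ∈ clsF G Ω q := by
  obtain ⟨hbΩ, hbq⟩ := (mem_clsF G).1 hb
  exact (mem_clsF G).2 ⟨hact.1 g b hbΩ, by rw [qmk_smul, hbq]⟩

lemma row_eq (hact : IsDAutAction G μ ν Ω) (q q' : Quotient (MulAction.orbitRel G V)) {a a' : V}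
    (ha : a ∈ clsF G Ω q) (ha' : a' ∈ clsF G Ω q) :
    ∑ b ∈ clsF G Ω q', μ a b = ∑ b ∈ clsF G Ω q', μ a' b := by
  obtain ⟨haΩ, haq⟩ := (mem_clsF G).1 ha
  obtain ⟨ha'Ω, ha'q⟩ := (mem_clsF G).1 ha'
  obtain ⟨g, hg⟩ := exists_smul_eq_of_qmk_eq G (show qmk G a' = qmk G a by rw [ha'q, haq])
  subst hg
  refine Finset.sum_nbij' (fun b => g • b) (fun b => g⁻¹ • b)
    (fun b hb => smul_mem_clsF G hact hb g) (fun b hb => smul_mem_clsF G hact hb g⁻¹)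
    (fun b _ => inv_smul_smul g b) (fun b _ => smul_inv_smul g b)
    (fun b hb => (hact.2.2.1 g a haΩ b ((mem_clsF G).1 hb).1).symm)

lemma row_val (hact : IsDAutAction G μ ν Ω) {q q' : Quotient (MulAction.orbitRel G V)} {a : V}
    (ha : a ∈ clsF G Ω q) :
    ∑ b ∈ clsF G Ω q', μ a b
      = (∑ x ∈ clsF G Ω q, ∑ y ∈ clsF G Ω q', μ x y) / (clsF G Ω q).card := by
  have hne : ((clsF G Ω q).card : ℝ) ≠ 0 :=
    Nat.cast_ne_zero.2 (Finset.card_pos.2 ⟨a, ha⟩).ne'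
  rw [eq_div_iff hne]
  have h1 : ∀ x ∈ clsF G Ω q, ∑ y ∈ clsF G Ω q', μ x y = ∑ b ∈ clsF G Ω q', μ a b :=
    fun x hx => row_eq G hact _ _ hx ha
  rw [Finset.sum_congr rfl h1, Finset.sum_const, nsmul_eq_mul]
  ring

lemma symF_apply (u : V → ℝ) (q : Quotient (MulAction.orbitRel G V)) :
    symF G Ω p u (some q)
      = ((∑ x ∈ clsF G Ω q, |u x| ^ p) / (clsF G Ω q).card) ^ p⁻¹ := rfl

lemma symF_nonneg (u : V → ℝ) (w : Option (Quotient (MulAction.orbitRel G V))) :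
    0 ≤ symF G Ω p u w := by
  match w with
  | none => exact le_rfl
  | some q =>
      exact Real.rpow_nonneg (div_nonneg
        (Finset.sum_nonneg fun x _ => Real.rpow_nonneg (abs_nonneg _) _)
        (Nat.cast_nonneg _)) _

lemma symF_zero_off (hp0 : p ≠ 0) (u : V → ℝ) :
    ∀ w, w ∉ quotOmega G Ω → symF G Ω p u w = 0 := by
  intro w hw
  match w with
  | none => rfl
  | some q =>
      have hq : q ∉ orbT G Ω := fun h => hw ((mem_quotOmega_some G).2 h)
      rw [symF_apply, clsF_eq_empty G hq]
      simp [Real.zero_rpow (inv_ne_zero hp0)]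

lemma symF_pow (hp0 : p ≠ 0) (u : V → ℝ) (q : Quotient (MulAction.orbitRel G V)) :
    symF G Ω p u (some q) ^ p = (∑ x ∈ clsF G Ω q, |u x| ^ p) / (clsF G Ω q).card := by
  rw [symF_apply]
  exact Real.rpow_inv_rpow (div_nonneg
    (Finset.sum_nonneg fun x _ => Real.rpow_nonneg (abs_nonneg _) _)
    (Nat.cast_nonneg _)) hp0

lemma symF_ne (hpp : 0 < p) {u : V → ℝ} {x₀ : V} (hx₀ : x₀ ∈ Ω) (hu : u x₀ ≠ 0) :
    symF G Ω p u (some (qmk G x₀)) ≠ 0 := by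
  have hmem : x₀ ∈ clsF G Ω (qmk G x₀) := (mem_clsF G).2 ⟨hx₀, rfl⟩
  have hpos : 0 < ∑ x ∈ clsF G Ω (qmk G x₀), |u x| ^ p :=
    Finset.sum_pos' (fun x _ => Real.rpow_nonneg (abs_nonneg _) _)
      ⟨x₀, hmem, Real.rpow_pos_of_pos (abs_pos.2 hu) _⟩
  have hcard : (0:ℝ) < (clsF G Ω (qmk G x₀)).card := by
    exact_mod_cast Finset.card_pos.2 ⟨x₀, hmem⟩
  rw [symF_apply]
  exact ne_of_gt (Real.rpow_pos_of_pos (div_pos hpos hcard) _)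

lemma sym_weight_sum (hp0 : p ≠ 0) (u : V → ℝ) (c : V → ℝ)
    (hc : ∀ q : Quotient (MulAction.orbitRel G V),
      ∀ x ∈ clsF G Ω q, ∀ y ∈ clsF G Ω q, c x = c y) :
    ∑ x ∈ Ω, c x * |liftF G Ω (symF G Ω p u) x| ^ p = ∑ x ∈ Ω, c x * |u x| ^ p := by
  rw [sum_fiber G (F := fun x => c x * |liftF G Ω (symF G Ω p u) x| ^ p),
    sum_fiber G (F := fun x => c x * |u x| ^ p)]
  refine Finset.sum_congr rfl fun q hq => ?_
  obtain ⟨xb, hxb⟩ := clsF_nonempty G hq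
  have hcard : ((clsF G Ω q).card : ℝ) ≠ 0 :=
    Nat.cast_ne_zero.2 (Finset.card_pos.2 ⟨xb, hxb⟩).ne'
  have hval : ∀ x ∈ clsF G Ω q, c x * |liftF G Ω (symF G Ω p u) x| ^ p
      = c xb * ((∑ y ∈ clsF G Ω q, |u y| ^ p) / (clsF G Ω q).card) := by
    intro x hx
    obtain ⟨hxΩ, hxq⟩ := (mem_clsF G).1 hx
    rw [hc q x hx xb hxb]
    congr 1
    simp only [liftF, if_pos hxΩ, hxq]
    rw [abs_of_nonneg (symF_nonneg G u _), symF_pow G hp0]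
  have hval2 : ∀ x ∈ clsF G Ω q, c x * |u x| ^ p = c xb * |u x| ^ p :=
    fun x hx => by rw [hc q x hx xb hxb]
  rw [Finset.sum_congr rfl hval, Finset.sum_congr rfl hval2, Finset.sum_const, nsmul_eq_mul,
    ← Finset.mul_sum]
  field_simp

lemma pair_ineq (hact : IsDAutAction G μ ν Ω) (hG : IsWeightedGraph μ ν) (hp : 1 < p)
    (u : V → ℝ) {q q' : Quotient (MulAction.orbitRel G V)}
    (hq : q ∈ orbT G Ω) (hq' : q' ∈ orbT G Ω) :
    (∑ x ∈ clsF G Ω q, ∑ y ∈ clsF G Ω q', μ x y)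
        * |symF G Ω p u (some q') - symF G Ω p u (some q)| ^ p
      ≤ ∑ x ∈ clsF G Ω q, ∑ y ∈ clsF G Ω q', μ x y * |u y - u x| ^ p := by
  classical
  have hp0 : p ≠ 0 := (zero_lt_one.trans hp).ne'
  set A := clsF G Ω q with hA
  set B := clsF G Ω q' with hB
  set Mt := ∑ x ∈ A, ∑ y ∈ B, μ x y with hMt
  have hX : ∑ i ∈ A ×ˢ B, μ i.1 i.2 * |u i.1| ^ p
      = (∑ i ∈ A ×ˢ B, μ i.1 i.2) * symF G Ω p u (some q) ^ p := by
    simp only [Finset.sum_product]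
    rw [symF_pow G hp0]
    calc ∑ x ∈ A, ∑ y ∈ B, μ x y * |u x| ^ p
        = ∑ x ∈ A, (Mt / A.card) * |u x| ^ p := by
          refine Finset.sum_congr rfl fun x hx => ?_
          rw [← Finset.sum_mul, row_val G hact hx]
      _ = Mt * ((∑ x ∈ A, |u x| ^ p) / A.card) := by
          rw [← Finset.mul_sum]
          ring
  have hY : ∑ i ∈ A ×ˢ B, μ i.1 i.2 * |u i.2| ^ p
      = (∑ i ∈ A ×ˢ B, μ i.1 i.2) * symF G Ω p u (some q') ^ p := by
    simp only [Finset.sum_product]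
    rw [symF_pow G hp0, Finset.sum_comm]
    calc ∑ y ∈ B, ∑ x ∈ A, μ x y * |u y| ^ p
        = ∑ y ∈ B, (Mt / B.card) * |u y| ^ p := by
          refine Finset.sum_congr rfl fun y hy => ?_
          rw [← Finset.sum_mul]
          congr 1
          have h1 : ∑ x ∈ A, μ x y = ∑ x ∈ A, μ y x :=
            Finset.sum_congr rfl fun x _ => hG.symm x y
          rw [h1, row_val G hact (q := q') (q' := q) hy]
          congr 1
          rw [Finset.sum_comm]
          exact Finset.sum_congr rfl fun x _ => Finset.sum_congr rfl fun y' _ => hG.symm y' x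
      _ = Mt * ((∑ y ∈ B, |u y| ^ p) / B.card) := by
          rw [← Finset.mul_sum]
          ring
  have h := weighted_minkowski (A ×ˢ B) (fun i => μ i.1 i.2) (fun i => u i.1) (fun i => u i.2)
    (fun i _ => hG.nonneg i.1 i.2) hp (symF_nonneg G u (some q)) (symF_nonneg G u (some q'))
    hX hY
  simp only [Finset.sum_product] at h
  exact h

lemma energy_sym_le (hact : IsDAutAction G μ ν Ω) (hG : IsWeightedGraph μ ν) (hp : 1 < p)
    (u : V → ℝ) (hu0 : ∀ x, x ∉ Ω → u x = 0) :
    energy μ p (liftF G Ω (symF G Ω p u)) ≤ energy μ p u := by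
  have hp0 : p ≠ 0 := (zero_lt_one.trans hp).ne'
  rw [energy_eq_of_zero_off hG hp0 _ (liftF_zero_off G _),
    energy_eq_of_zero_off hG hp0 u hu0]
  have hint : ∑ x ∈ Ω, ∑ y ∈ Ω,
        μ x y * |liftF G Ω (symF G Ω p u) y - liftF G Ω (symF G Ω p u) x| ^ p
      ≤ ∑ x ∈ Ω, ∑ y ∈ Ω, μ x y * |u y - u x| ^ p := by
    rw [interior_lift G (symF G Ω p u),
      interior_group G (F := fun x y => μ x y * |u y - u x| ^ p)]
    exact Finset.sum_le_sum fun q hq => Finset.sum_le_sum fun q' hq' =>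
      pair_ineq G hact hG hp u hq hq'
  have hbd : ∑ x ∈ Ω, bnd μ Ω x * |liftF G Ω (symF G Ω p u) x| ^ p
      = ∑ x ∈ Ω, bnd μ Ω x * |u x| ^ p := by
    apply sym_weight_sum G hp0
    intro q x hx y hy
    obtain ⟨hxΩ, hxq⟩ := (mem_clsF G).1 hx
    obtain ⟨hyΩ, hyq⟩ := (mem_clsF G).1 hy
    obtain ⟨g, hg⟩ := exists_smul_eq_of_qmk_eq G (show qmk G x = qmk G y by rw [hxq, hyq])
    rw [← hg]
    exact hact.2.2.2 g y hyΩ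
  rw [hbd]
  linarith [hint]

lemma pnorm_sym (hact : IsDAutAction G μ ν Ω) (hp0 : p ≠ 0) (u : V → ℝ) :
    pnormP ν Ω p (liftF G Ω (symF G Ω p u)) = pnormP ν Ω p u := by
  unfold pnormP
  have e1 : ∀ (v : V → ℝ), ∑ x ∈ Ω, |v x| ^ p * ν x = ∑ x ∈ Ω, ν x * |v x| ^ p :=
    fun v => Finset.sum_congr rfl fun x _ => mul_comm _ _
  rw [e1, e1]
  apply sym_weight_sum G hp0
  intro q x hx y hy
  obtain ⟨hxΩ, hxq⟩ := (mem_clsF G).1 hx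
  obtain ⟨hyΩ, hyq⟩ := (mem_clsF G).1 hy
  obtain ⟨g, hg⟩ := exists_smul_eq_of_qmk_eq G (show qmk G x = qmk G y by rw [hxq, hyq])
  rw [← hg]
  exact hact.2.1 g y hyΩ

end Aux

/-- for a finite connected subset `Ω` and a group `Γ` of Dirichlet
automorphisms of `Ω`, the first Dirichlet eigenvalue of the `p`-Laplacian (`p > 1`) on `Ω`
equals that on the quotient graph: `λ_{1,p}(Ω) = λ_{1,p}(Ω/Γ)`. -/
theorem lam1_quotient {V : Type*} {μ : V → V → ℝ} {ν : V → ℝ}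
    (hG : IsWeightedGraph μ ν) {Ω : Finset V} (hconn : ConnOn μ Ω)
    (G : Type*) [Group G] [MulAction G V] (hact : IsDAutAction G μ ν Ω)
    {p : ℝ} (hp : 1 < p) :
    lam1 μ ν Ω p = lam1 (quotMu G μ Ω) (quotNu G ν Ω) (quotOmega G Ω) p := by
  classical
  have hp0 : p ≠ 0 := (zero_lt_one.trans hp).ne'
  unfold lam1
  rcases Finset.eq_empty_or_nonempty Ω with hΩe | hΩne
  · subst hΩe
    congr 1
    ext t
    simp only [Set.mem_setOf_eq]
    constructor
    · rintro ⟨u, -, ⟨x, hx, -⟩, -⟩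
      exact absurd hx (Finset.notMem_empty x)
    · rintro ⟨f, -, ⟨w, hw, -⟩, -⟩
      rw [show quotOmega G (∅ : Finset V) = ∅ from by simp [quotOmega]] at hw
      exact absurd hw (Finset.notMem_empty w)
  · obtain ⟨x₀, hx₀⟩ := hΩne
    set S1 : Set ℝ := {t : ℝ | ∃ u : V → ℝ, (∀ x, x ∉ Ω → u x = 0) ∧ (∃ x ∈ Ω, u x ≠ 0) ∧
      t = energy μ p u / pnormP ν Ω p u} with hS1
    set S2 : Set ℝ := {t : ℝ | ∃ u : Option (Quotient (MulAction.orbitRel G V)) → ℝ,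
      (∀ w, w ∉ quotOmega G Ω → u w = 0) ∧ (∃ w ∈ quotOmega G Ω, u w ≠ 0) ∧
      t = energy (quotMu G μ Ω) p u
        / pnormP (quotNu G ν Ω) (quotOmega G Ω) p u} with hS2
    have hb1 : ∀ t ∈ S1, (0:ℝ) ≤ t := by
      rintro t ⟨u, hu0, hune, rfl⟩
      exact div_nonneg (energy_nonneg hG.nonneg u)
        (pnormP_nonneg (fun x => (hG.nuPos x).le) u)
    have hb2 : ∀ t ∈ S2, (0:ℝ) ≤ t := by
      rintro t ⟨f, hf0, hfne, rfl⟩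
      exact div_nonneg (energy_nonneg (fun w w' => quotMu_nonneg G hG.nonneg w w') f)
        (pnormP_nonneg (quotNu_nonneg G hG.nuPos) f)
    have hmapmem : ∀ (u : V → ℝ), (∀ x, x ∉ Ω → u x = 0) → (∃ x ∈ Ω, u x ≠ 0) →
        (energy (quotMu G μ Ω) p (symF G Ω p u)
          / pnormP (quotNu G ν Ω) (quotOmega G Ω) p (symF G Ω p u)) ∈ S2 ∧
        energy (quotMu G μ Ω) p (symF G Ω p u)
          / pnormP (quotNu G ν Ω) (quotOmega G Ω) p (symF G Ω p u)
          ≤ energy μ p u / pnormP ν Ω p u := by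
      intro u hu0 hune
      obtain ⟨x₁, hx₁, hux₁⟩ := hune
      constructor
      · exact ⟨symF G Ω p u, symF_zero_off G hp0 u,
          ⟨some (qmk G x₁), (mem_quotOmega_some G).2 ((mem_orbT G).2 ⟨x₁, hx₁, rfl⟩),
            symF_ne G (zero_lt_one.trans hp) hx₁ hux₁⟩, rfl⟩
      · have hpn : pnormP (quotNu G ν Ω) (quotOmega G Ω) p (symF G Ω p u)
            = pnormP ν Ω p u := by
          rw [← pnorm_lift G (symF G Ω p u), pnorm_sym G hact hp0 u]
        have hen : energy (quotMu G μ Ω) p (symF G Ω p u) ≤ energy μ p u := by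
          rw [← energy_lift G hG hp0 (symF G Ω p u) (symF_zero_off G hp0 u)]
          exact energy_sym_le G hact hG hp u hu0
        have hpos : 0 < pnormP ν Ω p u := pnormP_pos hG.nuPos hx₁ hux₁
        rw [hpn]
        exact (div_le_div_iff_of_pos_right hpos).mpr hen
    set u₀ : V → ℝ := fun x => if x = x₀ then 1 else 0 with hu₀
    have hu₀0 : ∀ x, x ∉ Ω → u₀ x = 0 := by
      intro x hx
      rw [hu₀]
      refine if_neg (fun h => hx ?_)
      rw [h]
      exact hx₀
    have hu₀ne : ∃ x ∈ Ω, u₀ x ≠ 0 := ⟨x₀, hx₀, by simp [hu₀]⟩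
    have hS1ne : S1.Nonempty := ⟨_, u₀, hu₀0, hu₀ne, rfl⟩
    have hS2ne : S2.Nonempty := ⟨_, (hmapmem u₀ hu₀0 hu₀ne).1⟩
    apply le_antisymm
    · apply csInf_le_csInf ⟨0, fun t ht => hb1 t ht⟩ hS2ne
      rintro t ⟨f, hf0, ⟨w, hw, hfw⟩, rfl⟩
      refine ⟨liftF G Ω f, liftF_zero_off G f, ?_, ?_⟩
      · rw [quotOmega_eq] at hw
        obtain ⟨q, hqT, rfl⟩ := Finset.mem_image.1 hw
        obtain ⟨x, hxΩ, hxq⟩ := (mem_orbT G).1 hqT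
        exact ⟨x, hxΩ, by simpa [liftF, if_pos hxΩ, hxq] using hfw⟩
      · rw [energy_lift G hG hp0 f hf0, pnorm_lift G f]
    · apply le_csInf hS1ne
      rintro t ⟨u, hu0, hune, rfl⟩
      obtain ⟨hmem, hle⟩ := hmapmem u hu0 hune
      exact le_trans (csInf_le ⟨0, fun t ht => hb2 t ht⟩ hmem) hle

end PGraph
end

section
/- Let L be a weighted linear graph on ℤ≥0 with edges {i, i+1} of weights μ_i > 0 and vertex weights ν_i > 0, and let Ω be a connected subgraph containing 0. Then the Cheeger constant of Ω is attained on balls: h(Ω) = inf over r with B_r ⊆ Ω of |∂B_r| / |B_r| = inf over r of μ_r / (Σ_{i=0}^r ν_i). -/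
namespace LinearGraph

/-- Edge weights of the linear graph on `ℤ≥0`: the edge `{i, i+1}` has weight `μ i`. -/
noncomputable def lw (μ : ℕ → ℝ) (i j : ℕ) : ℝ :=
  if j = i + 1 then μ i else if i = j + 1 then μ j else 0

/-- The edge boundary measure `|∂U|_μ` of a finite vertex set `U` in the linear graph. -/
noncomputable def bdry (μ : ℕ → ℝ) (U : Finset ℕ) : ℝ :=
  ∑ x ∈ U, ∑ᶠ y ∈ {z : ℕ | z ∉ U}, lw μ x y

/-- The Cheeger constant `h(Ω) = inf_{∅ ≠ U ⊆ Ω, U finite} |∂U|_μ / |U|_ν` of a subgraph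
`Ω` of the linear graph. -/
noncomputable def cheeg (μ ν : ℕ → ℝ) (Ω : Set ℕ) : ℝ :=
  sInf {t : ℝ | ∃ U : Finset ℕ, ↑U ⊆ Ω ∧ U.Nonempty ∧
    t = bdry μ U / ∑ x ∈ U, ν x}

/-- `Ω` is a connected subgraph of the linear graph. -/
def Conn (μ : ℕ → ℝ) (Ω : Set ℕ) : Prop :=
  ∀ x ∈ Ω, ∀ y ∈ Ω,
    Relation.ReflTransGen (fun a b => a ∈ Ω ∧ b ∈ Ω ∧ 0 < lw μ a b) x y

end LinearGraph

namespace LinearGraph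

lemma lw_nonneg {μ : ℕ → ℝ} (hμ : ∀ i, 0 < μ i) (i j : ℕ) : 0 ≤ lw μ i j := by
  unfold lw; split_ifs
  exacts [(hμ _).le, (hμ _).le, le_refl 0]

lemma lw_support {μ : ℕ → ℝ} {i j : ℕ} (h : lw μ i j ≠ 0) : j = i + 1 ∨ i = j + 1 := by
  unfold lw at h; split_ifs at h with h1 h2
  exacts [Or.inl h1, Or.inr h2, absurd rfl h]

/-- The inner finsum in `bdry` reduces to a finite sum over the two potential neighbors. -/
lemma inner_eq (μ : ℕ → ℝ) (U : Finset ℕ) (x : ℕ) :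
    ∑ᶠ y ∈ {z : ℕ | z ∉ U}, lw μ x y = ∑ y ∈ ({x + 1, x - 1} : Finset ℕ) \ U, lw μ x y := by
  apply finsum_mem_eq_sum_of_inter_support_eq
  ext z
  simp only [Set.mem_inter_iff, Set.mem_setOf_eq, Function.mem_support, Finset.coe_sdiff,
    Finset.coe_insert, Finset.coe_singleton, Set.mem_diff, Set.mem_insert_iff,
    Set.mem_singleton_iff, Finset.mem_coe]
  constructor
  · rintro ⟨hz, hne⟩
    rcases lw_support hne with h | h
    · exact ⟨⟨Or.inl h, hz⟩, hne⟩
    · exact ⟨⟨Or.inr (by omega), hz⟩, hne⟩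
  · rintro ⟨⟨_, hz⟩, hne⟩
    exact ⟨hz, hne⟩

lemma bdry_nonneg {μ : ℕ → ℝ} (hμ : ∀ i, 0 < μ i) (U : Finset ℕ) : 0 ≤ bdry μ U := by
  unfold bdry
  refine Finset.sum_nonneg fun x _ => ?_
  rw [inner_eq]
  exact Finset.sum_nonneg fun y _ => lw_nonneg hμ x y

/-- The boundary of the ball `B_r` is `μ r`. -/
lemma bdry_ball (μ : ℕ → ℝ) (r : ℕ) : bdry μ (Finset.range (r + 1)) = μ r := by
  unfold bdry
  rw [Finset.sum_eq_single_of_mem r (by simp)]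
  · rw [inner_eq]
    have : (({r + 1, r - 1} : Finset ℕ) \ Finset.range (r + 1)) = {r + 1} := by
      ext y
      simp only [Finset.mem_sdiff, Finset.mem_insert, Finset.mem_singleton, Finset.mem_range]
      omega
    rw [this, Finset.sum_singleton]
    simp [lw]
  · intro x hx hxr
    rw [inner_eq]
    apply Finset.sum_eq_zero
    intro y hy
    simp only [Finset.mem_sdiff, Finset.mem_insert, Finset.mem_singleton, Finset.mem_range,
      not_lt] at hy
    simp only [Finset.mem_range] at hx
    omega

/-- The boundary of any nonempty finite set is at least `μ R` where `R` is its maximum. -/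
lemma le_bdry {μ : ℕ → ℝ} (hμ : ∀ i, 0 < μ i) (U : Finset ℕ) (hU : U.Nonempty) :
    μ (U.max' hU) ≤ bdry μ U := by
  set R := U.max' hU with hR
  unfold bdry
  have h1 : μ R ≤ ∑ᶠ y ∈ {z : ℕ | z ∉ U}, lw μ R y := by
    rw [inner_eq]
    have hmem : R + 1 ∈ ({R + 1, R - 1} : Finset ℕ) \ U := by
      simp only [Finset.mem_sdiff, Finset.mem_insert, Finset.mem_singleton]
      refine ⟨Or.inl trivial, fun hc => ?_⟩
      have := U.le_max' _ hc
      omega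
    have : lw μ R (R + 1) ≤ ∑ y ∈ ({R + 1, R - 1} : Finset ℕ) \ U, lw μ R y :=
      Finset.single_le_sum (fun y _ => lw_nonneg hμ R y) hmem
    simpa [lw] using this
  calc μ R ≤ ∑ᶠ y ∈ {z : ℕ | z ∉ U}, lw μ R y := h1
    _ ≤ ∑ x ∈ U, ∑ᶠ y ∈ {z : ℕ | z ∉ U}, lw μ x y := by
        refine Finset.single_le_sum (f := fun x => ∑ᶠ y ∈ {z : ℕ | z ∉ U}, lw μ x y)
          (fun x _ => ?_) (U.max'_mem hU)
        rw [inner_eq]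
        exact Finset.sum_nonneg fun y _ => lw_nonneg hμ x y

/-- In a connected subgraph containing `0`, everything below an element is in the subgraph. -/
lemma ball_subset {μ : ℕ → ℝ} {Ω : Set ℕ} (h0 : 0 ∈ Ω) (hconn : Conn μ Ω)
    {x : ℕ} (hx : x ∈ Ω) : ∀ k ≤ x, k ∈ Ω := by
  have h := hconn 0 h0 x hx
  clear hx
  induction h with
  | refl =>
    intro k hk
    have hk0 : k = 0 := Nat.le_zero.mp hk
    rw [hk0]; exact h0
  | tail hab hbc ih =>
    rename_i b c
    obtain ⟨hbΩ, hcΩ, hlw⟩ := hbc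
    have hstep : c = b + 1 ∨ b = c + 1 := lw_support (ne_of_gt hlw)
    intro k hk
    rcases hstep with h | h
    · rcases Nat.lt_or_ge k c with hlt | hge
      · exact ih k (by omega)
      · have : k = c := by omega
        rwa [this]
    · exact ih k (by omega)

/-- for a connected subgraph `Ω` of the weighted linear graph on `ℤ≥0`
containing `0`, the Cheeger constant is attained on balls:
`h(Ω) = inf {μ_r / ∑_{i=0}^r ν_i : B_r ⊆ Ω}`. -/
theorem cheeger_on_balls (μ ν : ℕ → ℝ) (hμ : ∀ i, 0 < μ i) (hν : ∀ i, 0 < ν i)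
    (Ω : Set ℕ) (h0 : 0 ∈ Ω) (hconn : Conn μ Ω) :
    cheeg μ ν Ω = sInf {t : ℝ | ∃ r : ℕ, ↑(Finset.range (r + 1)) ⊆ Ω ∧
      t = μ r / ∑ i ∈ Finset.range (r + 1), ν i} := by
  set S1 := {t : ℝ | ∃ U : Finset ℕ, ↑U ⊆ Ω ∧ U.Nonempty ∧ t = bdry μ U / ∑ x ∈ U, ν x}
  set S2 := {t : ℝ | ∃ r : ℕ, ↑(Finset.range (r + 1)) ⊆ Ω ∧
      t = μ r / ∑ i ∈ Finset.range (r + 1), ν i}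
  have hsub : S2 ⊆ S1 := by
    rintro t ⟨r, hr, rfl⟩
    exact ⟨Finset.range (r + 1), hr, ⟨0, by simp⟩, by rw [bdry_ball]⟩
  have hne2 : S2.Nonempty := by
    refine ⟨μ 0 / ∑ i ∈ Finset.range 1, ν i, 0, ?_, rfl⟩
    intro x hx
    simp only [Finset.coe_range, Set.mem_Iio] at hx
    have : x = 0 := by omega
    rw [this]; exact h0
  have hbdd1 : BddBelow S1 := by
    refine ⟨0, ?_⟩
    rintro t ⟨U, hUΩ, hUne, rfl⟩
    have hpos : 0 < ∑ x ∈ U, ν x := Finset.sum_pos (fun x _ => hν x) hUne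
    exact div_nonneg (bdry_nonneg hμ U) hpos.le
  have hbdd2 : BddBelow S2 := hbdd1.mono hsub
  apply le_antisymm
  · exact csInf_le_csInf hbdd1 hne2 hsub
  · refine le_csInf (hne2.mono hsub) ?_
    rintro t ⟨U, hUΩ, hUne, rfl⟩
    set R := U.max' hUne with hRdef
    have hball : (↑(Finset.range (R + 1)) : Set ℕ) ⊆ Ω := by
      intro x hx
      simp only [Finset.coe_range, Set.mem_Iio] at hx
      exact ball_subset h0 hconn (hUΩ (U.max'_mem hUne)) x (by omega)
    have hmemS2 : μ R / ∑ i ∈ Finset.range (R + 1), ν i ∈ S2 := ⟨R, hball, rfl⟩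
    refine le_trans (csInf_le hbdd2 hmemS2) ?_
    have hUsub : U ⊆ Finset.range (R + 1) := fun x hx => by
      simp only [Finset.mem_range]
      have := U.le_max' x hx
      omega
    have hνle : ∑ x ∈ U, ν x ≤ ∑ i ∈ Finset.range (R + 1), ν i :=
      Finset.sum_le_sum_of_subset_of_nonneg hUsub (fun i _ _ => (hν i).le)
    have hνpos : 0 < ∑ x ∈ U, ν x := Finset.sum_pos (fun x _ => hν x) hUne
    exact div_le_div₀ (bdry_nonneg hμ U) (le_bdry hμ U hUne) hνpos hνle

end LinearGraph
end
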